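/- Let t ≥ 4 be even, let A ⊆ {1,…,t} be a nonempty union of ρ pairwise nonadjacent intervals [i_1,j_1], …, [i_ρ,j_ρ] (with j_k + 2 ≤ i_{k+1} for all k) such that 1 ∈ A and t ∉ A (so i_1 = 1 and j_ρ < t). Let R be the distinguished symmetric cycle on {1,−1}^t and W(R) its subtope matrix. Then the vector T := _{−A}T^{(+)} (the ±1 vector with negative part A) satisfies T = x̄·W(R) where x̄ = Σ_{k=1}^{ρ} P(t)^{j_k+1} − Σ_{ℓ=2}^{ρ} P(t)^{i_ℓ}. -/

import Mathlib

/-- The alternating-sign Toeplitz matrix P(t). -/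
def Pmat (t : ℕ) : Matrix (Fin t) (Fin t) ℝ :=
  Matrix.of fun i j =>
    if (i : ℕ) ≤ (j : ℕ) then (-1 : ℝ) ^ ((i : ℕ) + (j : ℕ))
    else (-1 : ℝ) ^ ((i : ℕ) + (j : ℕ) + 1)

/-- The distinguished symmetric cycle R in the hypercube graph on {1,-1}^t:
    R^0 = (1,…,1); for 1 ≤ s ≤ t-1, R^s is R^0 with the first s coordinates
    negated; and R^{k+t} = -R^k for 0 ≤ k ≤ t-1. -/
def Rcyc (t : ℕ) : ℕ → Fin t → ℝ := fun s i =>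
  if s < t then (if (i : ℕ) < s then -1 else 1)
  else (if (i : ℕ) < s - t then 1 else -1)

/-- The subtope matrix W(R), whose rows are S^k = (1/2)(R^k + R^{k+1}). -/
noncomputable def Wmat (t : ℕ) : Matrix (Fin t) (Fin t) ℝ :=
  Matrix.of fun (k : Fin t) (j : Fin t) =>
    (Rcyc t (k : ℕ) j + Rcyc t ((k : ℕ) + 1) j) / 2

/-!
Write `P^{m+1}` for row `m` of `P(t)`. Since `P^{m+2} = -P^{m+1} + 2e_{m+1}` and
`2S^m = R^m + R^{m+1}`, the defect `y_m = P^{m+1} W(R) - R^m` changes sign from one row to the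
next, so `y_{t-1} = -y_0` for even `t`. The wrap-around relations `P^t = P^1 + 2e_t` and
`R^t = -R^0` give `y_{t-1} = y_0` instead, hence every `y_m` vanishes: `P^{m+1} W(R) = R^m`.
Consequently `x̄ W(R) = Σ_k R^{j_k} - Σ_{ℓ ≥ 2} R^{i_ℓ - 1} = R^0 + Σ_k (R^{j_k} - R^{i_k - 1})`
because `i_1 = 1`, and `R^j - R^{i-1}` is `-2` times the indicator of `[i, j]`; as the intervals
are disjoint, the sum is the indicator of `A`.
-/

open Finset Matrix

lemma Pmat_row_succ (n : ℕ) (i : Fin n) :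
    Pmat (n + 1) i.succ = -Pmat (n + 1) i.castSucc + Pi.single i.castSucc 2 := by
  funext c
  simp only [Pmat, of_apply, Fin.val_succ, Fin.val_castSucc, Pi.add_apply, Pi.neg_apply,
    Pi.single_apply, Fin.ext_iff]
  rcases lt_trichotomy (c : ℕ) i with h | h | h
  · rw [if_neg (by omega), if_neg (by omega), if_neg (by omega)]; ring
  · rw [if_neg (by omega), if_pos (by omega), if_pos h, h,
      Even.neg_one_pow ⟨(i : ℕ) + 1, by ring⟩, Even.neg_one_pow ⟨(i : ℕ), rfl⟩]
    norm_num
  · rw [if_pos (by omega), if_pos (by omega), if_neg (by omega)]; ring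

lemma Pmat_row_last {n : ℕ} (hn : Odd n) :
    Pmat (n + 1) (Fin.last n) = Pmat (n + 1) 0 + Pi.single (Fin.last n) 2 := by
  funext c
  simp only [Pmat, of_apply, Fin.val_last, Fin.val_zero, Pi.add_apply, Pi.single_apply,
    Fin.ext_iff, zero_add, zero_le, if_true]
  rcases Nat.lt_succ_iff_lt_or_eq.mp c.isLt with h | h
  · rw [if_neg (by omega), if_neg (by omega), add_zero, add_right_comm,
      pow_add _ _ (c : ℕ), hn.add_one.neg_one_pow, one_mul]
  · rw [if_pos (by omega), if_pos h, h, Even.neg_one_pow ⟨n, rfl⟩, hn.neg_one_pow]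
    norm_num

lemma two_smul_Wmat_row (t : ℕ) (k : Fin t) :
    (2 : ℝ) • (Wmat t).row k = Rcyc t k + Rcyc t ((k : ℕ) + 1) := by
  funext j
  simp only [Wmat, row, of_apply, Pi.smul_apply, Pi.add_apply, smul_eq_mul]
  ring

lemma Rcyc_self (t : ℕ) : Rcyc t t = -Rcyc t 0 := by
  funext i
  simp [Rcyc, i.pos.ne']

theorem vecMul_Pmat_row_Wmat {t : ℕ} (hev : Even t) (m : Fin t) :
    Pmat t m ᵥ* Wmat t = Rcyc t m := by
  obtain ⟨n, rfl⟩ : ∃ n, t = n + 1 := Nat.exists_eq_succ_of_ne_zero m.pos.ne'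
  have hn : Odd n := by simpa [Nat.even_add_one] using hev
  set y : Fin (n + 1) → Fin (n + 1) → ℝ := fun m => Pmat (n + 1) m ᵥ* Wmat (n + 1) - Rcyc (n + 1) m
  have hy_succ : ∀ i : Fin n, y i.succ = -y i.castSucc := by
    intro i
    simp only [y, Pmat_row_succ, add_vecMul, neg_vecMul, single_vecMul, two_smul_Wmat_row,
      Fin.val_succ, Fin.val_castSucc]
    abel
  have hy_pow : ∀ i, y i = (-1 : ℝ) ^ (i : ℕ) • y 0 := by
    intro i
    induction i using Fin.induction with
    | zero => simp
    | succ i ih => rw [hy_succ, ih, Fin.val_succ, Fin.val_castSucc, pow_succ, mul_neg_one, neg_smul]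
  have hy_last : y (Fin.last n) = y 0 := by
    simp only [y, Pmat_row_last hn, add_vecMul, single_vecMul, two_smul_Wmat_row, Fin.val_last,
      Fin.val_zero, Rcyc_self]
    abel
  have hy_zero : y 0 = 0 := by
    have h := hy_pow (Fin.last n)
    rwa [hy_last, Fin.val_last, hn.neg_one_pow, neg_one_smul, self_eq_neg] at h
  have hm := hy_pow m
  rwa [hy_zero, smul_zero, sub_eq_zero] at hm

lemma Rcyc_apply_of_lt {t m : ℕ} (hm : m < t) (c : Fin t) :
    Rcyc t m c = if (c : ℕ) < m then -1 else 1 := by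
  simp [Rcyc, hm]

lemma Rcyc_sub_Rcyc {t i j : ℕ} (hij : i ≤ j) (hj : j < t) (c : Fin t) :
    Rcyc t j c - Rcyc t i c = if i ≤ c ∧ (c : ℕ) < j then -2 else 0 := by
  rw [Rcyc_apply_of_lt hj, Rcyc_apply_of_lt (hij.trans_lt hj)]
  split_ifs <;> first | omega | norm_num

section IntervalFamily

variable {ρ : ℕ} {lo hi : Fin ρ → ℕ} (hle : ∀ k, lo k ≤ hi k)
  (hgap : ∀ k : Fin ρ, ∀ h : (k : ℕ) + 1 < ρ, hi k < lo ⟨(k : ℕ) + 1, h⟩)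
include hle hgap

lemma hi_lt_lo_of_lt {a b : Fin ρ} (hab : a < b) : hi a < lo b := by
  obtain ⟨b, hb⟩ := b
  induction b with
  | zero => exact absurd (Fin.lt_def.mp hab) (Nat.not_lt_zero _)
  | succ b ih =>
    have hstep := hgap ⟨b, by omega⟩ hb
    rcases Nat.lt_succ_iff_lt_or_eq.mp (Fin.lt_def.mp hab) with h | h
    · exact ((ih (by omega) h).trans_le (hle _)).trans hstep
    · subst h
      exact hstep

lemma eq_of_mem_Icc_of_mem_Icc {a b : Fin ρ} {x : ℕ} (ha : x ∈ Set.Icc (lo a) (hi a))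
    (hb : x ∈ Set.Icc (lo b) (hi b)) : a = b := by
  by_contra hne
  rcases lt_or_gt_of_ne hne with h | h
  · have := hi_lt_lo_of_lt hle hgap h
    exact absurd (ha.2.trans_lt this) (not_lt.mpr hb.1)
  · have := hi_lt_lo_of_lt hle hgap h
    exact absurd (hb.2.trans_lt this) (not_lt.mpr ha.1)

end IntervalFamily

lemma sum_Rcyc_sub_sum_Rcyc_apply {t ρ : ℕ} (hρ : 1 ≤ ρ) {ii jj : Fin ρ → ℕ}
    (hle : ∀ k, ii k ≤ jj k) (hlt : ∀ k, jj k < t)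
    (hgap : ∀ k : Fin ρ, ∀ h : (k : ℕ) + 1 < ρ, jj k < ii ⟨(k : ℕ) + 1, h⟩)
    (h1 : ii ⟨0, hρ⟩ = 1) (c : Fin t) :
    ∑ k, Rcyc t (jj k) c - ∑ k : Fin ρ, (if (k : ℕ) = 0 then 0 else Rcyc t (ii k - 1) c) =
      if ∃ k, ii k ≤ (c : ℕ) + 1 ∧ (c : ℕ) + 1 ≤ jj k then -1 else 1 := by
  have hterm : ∀ k : Fin ρ, Rcyc t (jj k) c - (if (k : ℕ) = 0 then 0 else Rcyc t (ii k - 1) c)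
      = (if (k : ℕ) = 0 then 1 else 0) + if ii k ≤ c + 1 ∧ c + 1 ≤ jj k then -2 else 0 := by
    intro k
    have hIcc : ii k - 1 ≤ c ∧ (c : ℕ) < jj k ↔ ii k ≤ c + 1 ∧ c + 1 ≤ jj k := by omega
    rw [← if_congr hIcc rfl rfl, ← Rcyc_sub_Rcyc (by have := hle k; omega) (hlt k)]
    split_ifs with hk
    · obtain rfl : k = ⟨0, hρ⟩ := Fin.ext hk
      rw [h1, Nat.sub_self, Rcyc_apply_of_lt c.pos, if_neg (Nat.not_lt_zero _)]
      ring
    · ring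
  have hdisj : ∀ a b : Fin ρ, ii a ≤ c + 1 ∧ c + 1 ≤ jj a → ii b ≤ c + 1 ∧ c + 1 ≤ jj b → a = b :=
    fun _ _ => eq_of_mem_Icc_of_mem_Icc hle hgap
  rw [← sum_sub_distrib, sum_congr rfl fun k _ => hterm k, sum_add_distrib,
    sum_ite_zero _ _ (fun a _ b _ ha hb => Fin.ext (ha.trans hb.symm)),
    sum_ite_zero _ _ (fun a _ b _ ha hb => hdisj a b ha hb)]
  simp only [mem_univ, true_and]
  rw [if_pos (⟨⟨0, hρ⟩, rfl⟩ : ∃ k : Fin ρ, (k : ℕ) = 0)]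
  split_ifs <;> norm_num

theorem stmt_16 (t : ℕ) (hev : Even t)
    (ρ : ℕ) (hρ : 1 ≤ ρ)
    (ii jj : Fin ρ → ℕ)
    -- each interval [i_k, j_k] satisfies 1 ≤ i_k ≤ j_k ≤ t-1 < t (so t ∉ A)
    (hb : ∀ k, 1 ≤ ii k ∧ ii k ≤ jj k ∧ jj k < t)
    -- consecutive intervals are nonadjacent: j_k + 2 ≤ i_{k+1}
    (hgap : ∀ k : Fin ρ, ∀ h : (k : ℕ) + 1 < ρ, jj k + 2 ≤ ii ⟨(k : ℕ) + 1, h⟩)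
    -- 1 ∈ A: the first interval starts at 1
    (h1 : ii ⟨0, hρ⟩ = 1) :
    -- _{−A}T^{(+)} = ( Σ_{k=1}^{ρ} P(t)^{j_k+1} − Σ_{ℓ=2}^{ρ} P(t)^{i_ℓ} ) · W(R)
    (fun c : Fin t =>
        if ∃ k, ii k ≤ (c : ℕ) + 1 ∧ (c : ℕ) + 1 ≤ jj k then (-1 : ℝ) else 1) =
      Matrix.vecMul
        (fun c =>
          (∑ k : Fin ρ, Pmat t ⟨jj k, (hb k).2.2⟩ c) -
          ∑ k : Fin ρ, (if (k : ℕ) = 0 then 0 else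
            Pmat t ⟨ii k - 1, by obtain ⟨a, b, c'⟩ := hb k; omega⟩ c))
        (Wmat t) := by
  trans (∑ k, Pmat t ⟨jj k, (hb k).2.2⟩ - ∑ k : Fin ρ, if (k : ℕ) = 0 then 0 else
    Pmat t ⟨ii k - 1, by have := hb k; omega⟩) ᵥ* Wmat t
  swap
  · congr 1
    ext c
    simp only [Pi.sub_apply, Finset.sum_apply, apply_ite (fun v : Fin t → ℝ => v c), Pi.zero_apply]
  rw [sub_vecMul, sum_vecMul, sum_vecMul]
  simp only [apply_ite (· ᵥ* Wmat t), zero_vecMul, vecMul_Pmat_row_Wmat hev]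
  funext c
  simp only [Pi.sub_apply, Finset.sum_apply, apply_ite (fun v : Fin t → ℝ => v c), Pi.zero_apply]
  exact (sum_Rcyc_sub_sum_Rcyc_apply hρ (fun k => (hb k).2.1) (fun k => (hb k).2.2)
    (fun k h => lt_of_lt_of_le (by omega) (hgap k h)) h1 c).symm
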